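/- Let (a_n)_{n≥1} be the {2}-LID sequence. Then a_1 = 1, a_2 = 2, a_3 = 4, and for all integers n ≥ 3 one has a_{n+1} = a_n + a_{n−2} and a_{n+1} > ∑_{i=1}^{n−2} a_i. -/

import Mathlib

/-- `L` is an `S`-legal index set: all pairwise index differences avoid `S`. -/
def SlidLegal (S : Set ℕ) (L : Finset ℕ) : Prop :=
  ∀ i ∈ L, ∀ j ∈ L, ((i : ℤ) - (j : ℤ)).natAbs ∉ S

/-- `m` has an `S`-LID decomposition using the terms `a 1, …, a n`. -/
def SlidDecomp (S : Set ℕ) (a : ℕ → ℕ) (n m : ℕ) : Prop :=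
  ∃ L : Finset ℕ, L ⊆ Finset.Icc 1 n ∧ SlidLegal S L ∧ m = ∑ ℓ ∈ L, a ℓ

/-- `a` is the `S`-LID sequence (indexed from `1`; `a 0` is unconstrained):
for each `n ≥ 1`, `a n` is the least positive integer with no `S`-LID
decomposition using `a 1, …, a (n-1)`. -/
def IsSlidSeq (S : Set ℕ) (a : ℕ → ℕ) : Prop :=
  ∀ n, 1 ≤ n → IsLeast {m | 0 < m ∧ ¬ SlidDecomp S a (n - 1) m} (a n)

/-!
Write `B k` for: every `{2}`-legal sum of `a 1, …, a (k+2)` is below `a (k+3) + a (k+1)`.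
Given `B k`, that number has no legal decomposition using `a 1, …, a (k+3)`: one avoiding index
`k+3` is too small, and one using `k+3` cannot use `k+1`, so its remaining part either
decomposes `a (k+1)` with `a 1, …, a k`, impossible by definition of `a (k+1)`, or contains
`a (k+2) > a (k+1)`.
Every smaller positive number is decomposable, by adding `a (k+3)` to a decomposition of the
difference with `a 1, …, a k`. Hence `a (k+4) = a (k+3) + a (k+1)`.

`B` is proved by strong induction, splitting a legal set according to which of its two top indices
it contains; by the recurrence, the bounds from the induction hypothesis add up to exactly
`a (k+4) + a (k+2)`.
-/

open Finset

def SlidDecompLT (S : Set ℕ) (a : ℕ → ℕ) (n B : ℕ) : Prop :=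
  ∀ m, SlidDecomp S a n m → m < B

section General

variable {S : Set ℕ} {a : ℕ → ℕ} {n m : ℕ}

theorem SlidLegal.mono {L L' : Finset ℕ} (h : L' ⊆ L) (hL : SlidLegal S L) : SlidLegal S L' :=
  fun i hi j hj => hL i (h hi) j (h hj)

theorem SlidDecomp.mono {n' : ℕ} (h : n ≤ n') (hd : SlidDecomp S a n m) :
    SlidDecomp S a n' m := by
  obtain ⟨L, hL, hleg, rfl⟩ := hd
  exact ⟨L, hL.trans (Icc_subset_Icc_right h), hleg, rfl⟩

theorem SlidDecomp.le_sum (hd : SlidDecomp S a n m) : m ≤ ∑ i ∈ Icc 1 n, a i := by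
  obtain ⟨L, hL, -, rfl⟩ := hd
  exact sum_le_sum_of_subset hL

theorem slidDecomp_self (h0 : 0 ∉ S) (hn : 1 ≤ n) : SlidDecomp S a n (a n) := by
  refine ⟨{n}, by simpa using hn, fun i hi j hj => ?_, by simp⟩
  rw [mem_singleton] at hi hj
  simpa [hi, hj] using h0

namespace IsSlidSeq

theorem pos (ha : IsSlidSeq S a) (hn : 1 ≤ n) : 0 < a n := (ha n hn).1.1

theorem not_slidDecomp (ha : IsSlidSeq S a) (n : ℕ) : ¬ SlidDecomp S a n (a (n + 1)) := by
  simpa using (ha (n + 1) (by omega)).1.2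

theorem le_of_not_slidDecomp (ha : IsSlidSeq S a) (hm : 0 < m) (hd : ¬ SlidDecomp S a n m) :
    a (n + 1) ≤ m :=
  (ha (n + 1) (by omega)).2 ⟨hm, by simpa using hd⟩

theorem slidDecomp_of_lt (ha : IsSlidSeq S a) (hm : 0 < m) (hlt : m < a (n + 1)) :
    SlidDecomp S a n m := by
  by_contra hd
  exact (ha.le_of_not_slidDecomp hm hd).not_gt hlt

theorem lt_succ (ha : IsSlidSeq S a) (h0 : 0 ∉ S) (hn : 1 ≤ n) : a n < a (n + 1) := by
  obtain ⟨k, rfl⟩ : ∃ k, n = k + 1 := ⟨n - 1, by omega⟩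
  have hne : a (k + 1 + 1) ≠ a (k + 1) := fun h =>
    ha.not_slidDecomp (k + 1) (h ▸ slidDecomp_self h0 hn)
  refine lt_of_le_of_ne (not_lt.1 fun hlt => ?_) hne.symm
  exact ha.not_slidDecomp (k + 1) <|
    (ha.slidDecomp_of_lt (ha.pos (by omega)) hlt).mono (Nat.le_succ k)

theorem le_sum_Icc_add_one (ha : IsSlidSeq S a) (n : ℕ) :
    a (n + 1) ≤ ∑ i ∈ Icc 1 n, a i + 1 :=
  ha.le_of_not_slidDecomp (by omega) fun hd => by have := hd.le_sum; omega

theorem apply_one (ha : IsSlidSeq S a) : a 1 = 1 := by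
  have hle : a 1 ≤ 1 := by simpa using ha.le_sum_Icc_add_one 0
  exact le_antisymm hle (ha.pos le_rfl)

theorem apply_two (ha : IsSlidSeq S a) (h0 : 0 ∉ S) : a 2 = 2 := by
  have hle : a 2 ≤ a 1 + 1 := by simpa using ha.le_sum_Icc_add_one 1
  have hlt : a 1 < a 2 := ha.lt_succ h0 le_rfl
  rw [ha.apply_one] at hle hlt
  omega

theorem apply_three (ha : IsSlidSeq S a) (h0 : 0 ∉ S) (h1 : 1 ∉ S) : a 3 = 4 := by
  have hsum : ∑ i ∈ Icc 1 2, a i = 3 := by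
    rw [show Icc 1 2 = {1, 2} from rfl, sum_pair (by omega), ha.apply_one, ha.apply_two h0]
  have hle : a 3 ≤ 3 + 1 := by simpa [hsum] using ha.le_sum_Icc_add_one 2
  have hlt : 2 < a 3 := ha.apply_two h0 ▸ ha.lt_succ h0 (n := 2) (by omega)
  have hlegal : SlidLegal S (Icc 1 2) := by
    intro i hi j hj
    simp only [mem_Icc] at hi hj
    rcases (by omega : i = j ∨ i + 1 = j ∨ j + 1 = i) with rfl | rfl | rfl <;> simp [h0, h1]
  have hne : a 3 ≠ 3 := fun h =>
    ha.not_slidDecomp 2 (h ▸ hsum ▸ ⟨Icc 1 2, subset_rfl, hlegal, rfl⟩)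
  omega

end IsSlidSeq

end General

section Two

variable {a : ℕ → ℕ} {k m : ℕ}

theorem SlidLegal.notMem_of_add_two_mem {L : Finset ℕ} (hL : SlidLegal {2} L) {i : ℕ}
    (hi : i + 2 ∈ L) : i ∉ L :=
  fun h => hL _ hi _ h (by simp)

theorem SlidDecomp.two_add (hd : SlidDecomp {2} a k m) :
    SlidDecomp {2} a (k + 3) (m + a (k + 3)) := by
  obtain ⟨L, hL, hleg, rfl⟩ := hd
  have hbelow : ∀ i ∈ L, i ≤ k := fun i hi => (mem_Icc.1 (hL hi)).2
  refine ⟨insert (k + 3) L, insert_subset (by simp) (hL.trans (Icc_subset_Icc_right (by omega))),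
    fun i hi j hj => ?_, by rw [sum_insert fun h => by have := hbelow _ h; omega, add_comm]⟩
  rw [mem_insert] at hi hj
  rcases hi with rfl | hi <;> rcases hj with rfl | hj
  · simp
  · have := hbelow j hj; simp only [Set.mem_singleton_iff]; omega
  · have := hbelow i hi; simp only [Set.mem_singleton_iff]; omega
  · exact hleg i hi j hj

theorem SlidDecomp.two_cases (hd : SlidDecomp {2} a (k + 3) m) :
    SlidDecomp {2} a (k + 2) m ∨ (∃ r, SlidDecomp {2} a k r ∧ m = r + a (k + 3)) ∨
      ∃ r, SlidDecomp {2} a (k - 1) r ∧ m = r + a (k + 2) + a (k + 3) := by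
  obtain ⟨L, hL, hleg, rfl⟩ := hd
  have hmem : ∀ i ∈ L, 1 ≤ i ∧ i ≤ k + 3 := fun i hi => mem_Icc.1 (hL hi)
  by_cases h3 : k + 3 ∈ L
  swap
  · refine .inl ⟨L, fun i hi => ?_, hleg, rfl⟩
    have := hmem i hi
    have : i ≠ k + 3 := by rintro rfl; exact h3 hi
    rw [mem_Icc]; omega
  have h1 : k + 1 ∉ L := hleg.notMem_of_add_two_mem h3
  rw [← add_sum_erase L a h3]
  by_cases h2 : k + 2 ∈ L
  · have h0 : k ∉ L := hleg.notMem_of_add_two_mem h2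
    have h2' : k + 2 ∈ L.erase (k + 3) := mem_erase.2 ⟨by omega, h2⟩
    refine .inr <| .inr ⟨_, ⟨(L.erase (k + 3)).erase (k + 2), fun i hi => ?_,
      hleg.mono ((erase_subset _ _).trans (erase_subset _ _)), rfl⟩,
      by rw [← add_sum_erase _ a h2']; ring⟩
    simp only [mem_erase] at hi
    have := hmem i hi.2.2
    have : i ≠ k + 1 := by rintro rfl; exact h1 hi.2.2
    have : i ≠ k := by rintro rfl; exact h0 hi.2.2
    rw [mem_Icc]; omega
  · refine .inr <| .inl
      ⟨_, ⟨L.erase (k + 3), fun i hi => ?_, hleg.mono (erase_subset _ _), rfl⟩, add_comm _ _⟩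
    rw [mem_erase] at hi
    have := hmem i hi.2
    have : i ≠ k + 1 := by rintro rfl; exact h1 hi.2
    have : i ≠ k + 2 := by rintro rfl; exact h2 hi.2
    rw [mem_Icc]; omega

theorem SlidDecompLT.two_succ (h4 : SlidDecompLT {2} a (k + 2) (a (k + 4)))
    (h2 : SlidDecompLT {2} a k (a (k + 2))) (h1 : SlidDecompLT {2} a (k - 1) (a (k + 1)))
    (hrec : a (k + 4) = a (k + 3) + a (k + 1)) :
    SlidDecompLT {2} a (k + 3) (a (k + 4) + a (k + 2)) := by
  intro m hm
  rcases hm.two_cases with hm | ⟨r, hr, rfl⟩ | ⟨r, hr, rfl⟩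
  · have := h4 m hm; omega
  · have := h2 r hr; omega
  · have := h1 r hr; omega

namespace IsSlidSeq

variable (ha : IsSlidSeq {2} a)
include ha

theorem two_add_le (k : ℕ) : a (k + 3) + a (k + 1) ≤ a (k + 4) := by
  have hlt : a (k + 3) < a (k + 4) := ha.lt_succ (by simp) (by omega)
  by_contra! h
  refine ha.not_slidDecomp (k + 3) ?_
  have hd := ha.slidDecomp_of_lt (n := k) (m := a (k + 4) - a (k + 3)) (by omega) (by omega)
  simpa [Nat.sub_add_cancel hlt.le] using hd.two_add

theorem two_recurrence_of_slidDecompLT (hB : SlidDecompLT {2} a (k + 2) (a (k + 3) + a (k + 1))) :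
    a (k + 4) = a (k + 3) + a (k + 1) := by
  refine le_antisymm (ha.le_of_not_slidDecomp (by have := ha.pos (n := k + 3) (by omega); omega)
    fun hd => ?_) (ha.two_add_le k)
  rcases hd.two_cases with hd | ⟨r, hr, hsum⟩ | ⟨r, -, hsum⟩
  · exact lt_irrefl _ (hB _ hd)
  · exact ha.not_slidDecomp k (by rwa [show r = a (k + 1) by omega] at hr)
  · have : a (k + 1) < a (k + 2) := ha.lt_succ (by simp) (by omega)
    omega

theorem two_slidDecompLT_zero : SlidDecompLT {2} a 2 (a 3 + a 1) := by
  intro m hm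
  have hle := hm.le_sum
  rw [show Icc 1 2 = {1, 2} from rfl, sum_pair (by omega), ha.apply_one,
    ha.apply_two (by simp)] at hle
  rw [ha.apply_three (by simp) (by simp), ha.apply_one]
  omega

theorem two_slidDecompLT_of_le_three {n : ℕ} (h1 : 1 ≤ n) (h3 : n ≤ 3) :
    SlidDecompLT {2} a (n - 2) (a n) := by
  intro m hm
  have hle := hm.le_sum
  interval_cases n
  · simp_all [ha.apply_one]
  · simp_all [ha.apply_two (S := {2})]
  · simp_all [ha.apply_one, ha.apply_three (S := {2})]
    omega

theorem two_slidDecompLT (k : ℕ) : SlidDecompLT {2} a (k + 2) (a (k + 3) + a (k + 1)) := by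
  induction k using Nat.strong_induction_on with
  | _ k ih =>
  have hbelow : ∀ n, 1 ≤ n → n ≤ k + 3 → SlidDecompLT {2} a (n - 2) (a n) := by
    intro n h1 h3
    rcases Nat.lt_or_ge n 4 with hn | hn
    · exact ha.two_slidDecompLT_of_le_three h1 (by omega)
    · obtain ⟨i, rfl⟩ : ∃ i, n = i + 4 := ⟨n - 4, by omega⟩
      have hB := ih i (by omega)
      simpa [ha.two_recurrence_of_slidDecompLT hB] using hB
  cases k with
  | zero => exact ha.two_slidDecompLT_zero
  | succ k =>
    exact .two_succ (hbelow (k + 4) (by omega) le_rfl) (hbelow (k + 2) (by omega) (by omega))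
      (hbelow (k + 1) (by omega) (by omega)) (ha.two_recurrence_of_slidDecompLT (ih k (by omega)))

theorem two_recurrence (k : ℕ) : a (k + 4) = a (k + 3) + a (k + 1) :=
  ha.two_recurrence_of_slidDecompLT (ha.two_slidDecompLT k)

end IsSlidSeq

end Two

theorem sum_Icc_lt_of_recurrence {a : ℕ → ℕ} (h3 : 0 < a 3)
    (hrec : ∀ k, a (k + 4) = a (k + 3) + a (k + 1)) (k : ℕ) :
    ∑ i ∈ Icc 1 k, a i < a (k + 3) := by
  induction k with
  | zero => simpa using h3
  | succ k ih =>
    rw [sum_Icc_succ_top (by omega), hrec]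
    omega

theorem two_slid_recurrence
    (a : ℕ → ℕ) (ha : IsSlidSeq {2} a) :
    a 1 = 1 ∧ a 2 = 2 ∧ a 3 = 4 ∧
    ∀ n, 3 ≤ n →
      a (n + 1) = a n + a (n - 2) ∧
      (∑ i ∈ Finset.Icc 1 (n - 2), a i) < a (n + 1) := by
  refine ⟨ha.apply_one, ha.apply_two (by simp), ha.apply_three (by simp) (by simp),
    fun n hn => ?_⟩
  obtain ⟨k, rfl⟩ : ∃ k, n = k + 1 + 2 := ⟨n - 3, by omega⟩
  exact ⟨ha.two_recurrence k,
    sum_Icc_lt_of_recurrence (ha.pos (by omega)) ha.two_recurrence (k + 1)⟩
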